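/- The Jaccard distance 1 − J(A,B) is a metric on finite nonempty subsets of a fixed finite set. -/

import Mathlib

/-!
Write `δ(A, B) = |A ∆ B|`, a metric on finite sets. Since `|A ∩ B| + |A ∆ B| = |A ∪ B|` and
`|A| + |B| + |A ∆ B| = 2 |A ∪ B|`, the Jaccard distance is the Steinhaus transform
`2 δ(A, B) / (δ(A, ∅) + δ(B, ∅) + δ(A, B))` of `δ` with base point `∅`, and the Steinhaus
transform of any metric is again a metric.
-/

open Finset
open scoped symmDiff

lemma div_add_le_div_add_of_le {p p' q : ℝ} (hp : 0 ≤ p) (hq : 0 ≤ q) (hpp' : p ≤ p') :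
    p / (p + q) ≤ p' / (p' + q) := by
  rcases (add_nonneg hp hq).eq_or_lt with h | h
  · rw [← h, div_zero]
    exact div_nonneg (hp.trans hpp') (by linarith)
  · rw [div_le_div_iff₀ h (by linarith)]
    nlinarith

lemma div_le_div_of_le_of_nonneg_left {a b c : ℝ} (ha : 0 ≤ a) (hac : a ≤ c) (hcb : c ≤ b) :
    a / b ≤ a / c := by
  rcases ha.eq_or_lt with rfl | ha
  · simp
  · exact div_le_div_of_nonneg_left ha.le (ha.trans_le hac) hcb

section Steinhaus

variable {X : Type*}

noncomputable def steinhaus (δ : X → X → ℝ) (a x y : X) : ℝ :=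
  2 * δ x y / (δ x a + δ y a + δ x y)

variable {δ : X → X → ℝ}

lemma steinhaus_nonneg (hδ₀ : ∀ x y, 0 ≤ δ x y) (a x y : X) : 0 ≤ steinhaus δ a x y := by
  have := hδ₀ x y; have := hδ₀ x a; have := hδ₀ y a
  unfold steinhaus; positivity

lemma steinhaus_eq_zero_iff (hδ₀ : ∀ x y, 0 ≤ δ x y) (a x y : X) :
    steinhaus δ a x y = 0 ↔ δ x y = 0 := by
  have := hδ₀ x y; have := hδ₀ x a; have := hδ₀ y a
  unfold steinhaus
  constructor
  · intro h
    rcases div_eq_zero_iff.mp h with h | h <;> linarith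
  · intro h
    simp [h]

lemma steinhaus_comm (hδ : ∀ x y, δ x y = δ y x) (a x y : X) :
    steinhaus δ a x y = steinhaus δ a y x := by
  unfold steinhaus
  rw [hδ x y, add_comm (δ x a)]

/- Enlarge the numerator `δ x z` to `δ x y + δ y z` (`p / (p + q)` increases with `p`), then
shrink each of the two denominators by the triangle inequality through `a`. -/
lemma steinhaus_triangle (hδ₀ : ∀ x y, 0 ≤ δ x y) (hδ : ∀ x y, δ x y = δ y x)
    (hδ₃ : ∀ x y z, δ x z ≤ δ x y + δ y z) (a x y z : X) :
    steinhaus δ a x z ≤ steinhaus δ a x y + steinhaus δ a y z := by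
  have := hδ₀ x a; have := hδ₀ y a; have := hδ₀ z a
  unfold steinhaus
  simp only [mul_div_assoc, ← mul_add]
  gcongr
  calc δ x z / (δ x a + δ z a + δ x z)
      = δ x z / (δ x z + (δ x a + δ z a)) := by rw [add_comm (δ x a + δ z a)]
    _ ≤ (δ x y + δ y z) / ((δ x y + δ y z) + (δ x a + δ z a)) :=
      div_add_le_div_add_of_le (hδ₀ x z) (by positivity) (hδ₃ x y z)
    _ = δ x y / (δ x y + δ y z + (δ x a + δ z a)) + δ y z / (δ x y + δ y z + (δ x a + δ z a)) :=
      add_div _ _ _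
    _ ≤ δ x y / (δ x a + δ y a + δ x y) + δ y z / (δ y a + δ z a + δ y z) :=
      add_le_add
        (div_le_div_of_le_of_nonneg_left (hδ₀ x y) (by linarith) (by linarith [hδ₃ y z a]))
        (div_le_div_of_le_of_nonneg_left (hδ₀ y z) (by linarith)
          (by linarith [hδ₃ y x a, hδ x y]))

end Steinhaus

namespace Finset

variable {α : Type*} [DecidableEq α]

noncomputable def symmDiffDist (A B : Finset α) : ℝ := #(A ∆ B)

lemma symmDiffDist_nonneg (A B : Finset α) : 0 ≤ symmDiffDist A B := Nat.cast_nonneg _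

lemma symmDiffDist_comm (A B : Finset α) : symmDiffDist A B = symmDiffDist B A := by
  rw [symmDiffDist, symmDiffDist, symmDiff_comm]

lemma symmDiffDist_triangle (A B C : Finset α) :
    symmDiffDist A C ≤ symmDiffDist A B + symmDiffDist B C := by
  unfold symmDiffDist
  exact_mod_cast (card_le_card (symmDiff_triangle A B C)).trans (card_union_le _ _)

lemma symmDiffDist_eq_zero_iff {A B : Finset α} : symmDiffDist A B = 0 ↔ A = B := by
  rw [symmDiffDist, Nat.cast_eq_zero, card_eq_zero, ← bot_eq_empty, symmDiff_eq_bot]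

lemma card_symmDiff_add_card_inter (A B : Finset α) : #(A ∆ B) + #(A ∩ B) = #(A ∪ B) := by
  rw [symmDiff_eq_sup_sdiff_inf, sup_eq_union, inf_eq_inter,
    card_sdiff_of_subset inter_subset_union, Nat.sub_add_cancel (card_le_card inter_subset_union)]

lemma one_sub_card_inter_div_card_union_eq_steinhaus {A B : Finset α} (h : (A ∪ B).Nonempty) :
    1 - (#(A ∩ B) : ℝ) / #(A ∪ B) = steinhaus symmDiffDist ∅ A B := by
  have hΔ : (#(A ∆ B) : ℝ) = #(A ∪ B) - #(A ∩ B) := by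
    rw [← card_symmDiff_add_card_inter]; push_cast; ring
  have hui : (#(A ∪ B) + #(A ∩ B) : ℝ) = #A + #B := by
    exact_mod_cast card_union_add_card_inter A B
  have hden : (#A + #B + #(A ∆ B) : ℝ) = 2 * #(A ∪ B) := by linarith
  have hpos : (0 : ℝ) < #(A ∪ B) := by exact_mod_cast h.card_pos
  unfold steinhaus symmDiffDist
  rw [← bot_eq_empty, symmDiff_bot, symmDiff_bot, hden, mul_div_mul_left _ _ two_ne_zero, hΔ,
    sub_div, div_self hpos.ne']

end Finset

theorem stmt12_general {α : Type*} [DecidableEq α]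
    (d : Finset α → Finset α → ℝ)
    (hd : ∀ A B : Finset α, d A B = 1 - ((A ∩ B).card : ℝ) / ((A ∪ B).card : ℝ)) :
    ∀ A B C : Finset α, A.Nonempty → B.Nonempty → C.Nonempty →
      (0 ≤ d A B) ∧ (d A B = d B A) ∧ (d A B = 0 ↔ A = B) ∧
        (d A C ≤ d A B + d B C) := by
  intro A B C hA hB _
  have hd' : ∀ X Y : Finset α, X.Nonempty → d X Y = steinhaus symmDiffDist ∅ X Y := fun X Y hX =>
    (hd X Y).trans (one_sub_card_inter_div_card_union_eq_steinhaus (hX.mono subset_union_left))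
  rw [hd' A B hA, hd' B A hB, hd' A C hA, hd' B C hB]
  exact ⟨steinhaus_nonneg symmDiffDist_nonneg _ _ _, steinhaus_comm symmDiffDist_comm _ _ _,
    (steinhaus_eq_zero_iff symmDiffDist_nonneg _ _ _).trans symmDiffDist_eq_zero_iff,
    steinhaus_triangle symmDiffDist_nonneg symmDiffDist_comm symmDiffDist_triangle _ _ _ _⟩

/-- the Jaccard distance d(A,B) = 1 − |A∩B|/|A∪B| is a metric on the
finite nonempty subsets of a fixed finite set: it is symmetric, vanishes exactly on
the diagonal, and satisfies the triangle inequality. -/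
theorem stmt12 {α : Type*} [Fintype α] [DecidableEq α]
    (d : Finset α → Finset α → ℝ)
    (hd : ∀ A B : Finset α, d A B = 1 - ((A ∩ B).card : ℝ) / ((A ∪ B).card : ℝ)) :
    ∀ A B C : Finset α, A.Nonempty → B.Nonempty → C.Nonempty →
      (0 ≤ d A B) ∧ (d A B = d B A) ∧ (d A B = 0 ↔ A = B) ∧
        (d A C ≤ d A B + d B C) :=
  stmt12_general d hd
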